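/- arXiv:2011.10992 — 3 statements merged into one kernel-verified Lean document; each statement's English description precedes it below -/
import Mathlib

section
/- If φ : (0,1] → ℝ is Lipschitz with φ vanishing at 0 (i.e. |φ(x)| ≤ L·x for Lipschitz constant L), and K(x,y) ≤ K₀(x^{-α}+y^{-α})(x^β+y^β) with α,β ∈ [0,1], then for all x,y ∈ (0,1], K(x,y)·|A[φ](x,y)| ≤ 8·K₀·L, where A[φ](x,y) = φ̄(x+y) − φ(x) − φ(y) and φ̄ is the extension of φ to (0,∞) by the constant φ(1). -/
open Set

lemma aux_A_bound (L : ℝ) (φ : ℝ → ℝ)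
    (hφLip : ∀ x ∈ Ioc (0:ℝ) 1, ∀ y ∈ Ioc (0:ℝ) 1, |φ x - φ y| ≤ L * |x - y|)
    (hφ0 : ∀ x ∈ Ioc (0:ℝ) 1, |φ x| ≤ L * x)
    (x y : ℝ) (hx : x ∈ Ioc (0:ℝ) 1) (hy : y ∈ Ioc (0:ℝ) 1) (hxy : x ≤ y) :
    |(if x + y ≤ 1 then φ (x + y) else φ 1) - φ x - φ y| ≤ 2 * L * x := by
  obtain ⟨hx0, hx1⟩ := hx
  obtain ⟨hy0, hy1⟩ := hy
  have hφx := hφ0 x ⟨hx0, hx1⟩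
  split_ifs with h
  · have h1 : |φ (x + y) - φ y| ≤ L * |x + y - y| :=
      hφLip _ ⟨by linarith, h⟩ _ ⟨hy0, hy1⟩
    have habs : |x + y - y| = x := by
      rw [show x + y - y = x by ring, abs_of_pos hx0]
    rw [habs] at h1
    calc |φ (x + y) - φ x - φ y| ≤ |φ (x + y) - φ y| + |φ x| := by
          rw [show φ (x + y) - φ x - φ y = (φ (x + y) - φ y) + (-(φ x)) by ring]
          exact (abs_add_le _ _).trans (by rw [abs_neg])
      _ ≤ L * x + L * x := add_le_add h1 hφx
      _ = 2 * L * x := by ring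
  · have h1 : |φ 1 - φ y| ≤ L * |1 - y| :=
      hφLip 1 ⟨one_pos, le_refl _⟩ y ⟨hy0, hy1⟩
    have habs : |(1:ℝ) - y| = 1 - y := abs_of_nonneg (by linarith)
    rw [habs] at h1
    have hL' : 0 ≤ L := by
      have := hφ0 x ⟨hx0, hx1⟩
      nlinarith [abs_nonneg (φ x)]
    calc |φ 1 - φ x - φ y| ≤ |φ 1 - φ y| + |φ x| := by
          rw [show φ 1 - φ x - φ y = (φ 1 - φ y) + (-(φ x)) by ring]
          exact (abs_add_le _ _).trans (by rw [abs_neg])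
      _ ≤ L * (1 - y) + L * x := add_le_add h1 hφx
      _ ≤ 2 * L * x := by nlinarith

/-- If `φ : (0,1] → ℝ` is Lipschitz with constant `L` and vanishes at `0`
(so `|φ x| ≤ L * x`), and `K x y ≤ K₀ (x^(-α) + y^(-α)) (x^β + y^β)` with `α, β ∈ [0,1]`,
then `K x y * |A[φ] x y| ≤ 8 K₀ L` on `(0,1]²`, where
`A[φ] x y = φ̄ (x+y) - φ x - φ y` and `φ̄` extends `φ` by the constant `φ 1` past `1`. -/
theorem stmt_0 (α β K₀ L : ℝ) (hα : α ∈ Icc (0:ℝ) 1) (hβ : β ∈ Icc (0:ℝ) 1)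
    (hK₀ : 0 ≤ K₀) (hL : 0 ≤ L) (K : ℝ → ℝ → ℝ) (φ : ℝ → ℝ)
    (hKnn : ∀ x ∈ Ioi (0:ℝ), ∀ y ∈ Ioi (0:ℝ), 0 ≤ K x y)
    (hKbd : ∀ x ∈ Ioi (0:ℝ), ∀ y ∈ Ioi (0:ℝ),
      K x y ≤ K₀ * (x ^ (-α) + y ^ (-α)) * (x ^ β + y ^ β))
    (hφLip : ∀ x ∈ Ioc (0:ℝ) 1, ∀ y ∈ Ioc (0:ℝ) 1, |φ x - φ y| ≤ L * |x - y|)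
    (hφ0 : ∀ x ∈ Ioc (0:ℝ) 1, |φ x| ≤ L * x) :
    ∀ x ∈ Ioc (0:ℝ) 1, ∀ y ∈ Ioc (0:ℝ) 1,
      K x y * |(if x + y ≤ 1 then φ (x + y) else φ 1) - φ x - φ y| ≤ 8 * K₀ * L := by
  intro x hx y hy
  obtain ⟨hx0, hx1⟩ := hx
  obtain ⟨hy0, hy1⟩ := hy
  set m := min x y with hm
  have hm0 : 0 < m := lt_min hx0 hy0
  have hm1 : m ≤ 1 := le_trans (min_le_left _ _) hx1
  -- bound on |A|
  have hA : |(if x + y ≤ 1 then φ (x + y) else φ 1) - φ x - φ y| ≤ 2 * L * m := by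
    rcases le_total x y with hxy | hxy
    · rw [hm, min_eq_left hxy]
      exact aux_A_bound L φ hφLip hφ0 x y ⟨hx0, hx1⟩ ⟨hy0, hy1⟩ hxy
    · rw [hm, min_eq_right hxy]
      have h := aux_A_bound L φ hφLip hφ0 y x ⟨hy0, hy1⟩ ⟨hx0, hx1⟩ hxy
      rw [add_comm y x] at h
      rwa [show (if x + y ≤ 1 then φ (x + y) else φ 1) - φ y - φ x
        = (if x + y ≤ 1 then φ (x + y) else φ 1) - φ x - φ y from by ring] at h
  -- bound on K
  have hK4 : K x y ≤ 4 * K₀ * m ^ (-α) := by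
    have h1 : x ^ (-α) ≤ m ^ (-α) :=
      Real.rpow_le_rpow_of_nonpos hm0 (min_le_left _ _) (neg_nonpos.2 hα.1)
    have h2 : y ^ (-α) ≤ m ^ (-α) :=
      Real.rpow_le_rpow_of_nonpos hm0 (min_le_right _ _) (neg_nonpos.2 hα.1)
    have h3 : x ^ β ≤ 1 := Real.rpow_le_one hx0.le hx1 hβ.1
    have h4 : y ^ β ≤ 1 := Real.rpow_le_one hy0.le hy1 hβ.1
    have hstep : K₀ * (x ^ (-α) + y ^ (-α)) * (x ^ β + y ^ β)
        ≤ K₀ * (m ^ (-α) + m ^ (-α)) * (1 + 1) := by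
      gcongr
    calc K x y ≤ K₀ * (x ^ (-α) + y ^ (-α)) * (x ^ β + y ^ β) :=
          hKbd x hx0 y hy0
      _ ≤ K₀ * (m ^ (-α) + m ^ (-α)) * (1 + 1) := hstep
      _ = 4 * K₀ * m ^ (-α) := by ring
  have hKnn' : 0 ≤ K x y := hKnn x hx0 y hy0
  have hmα : 0 ≤ m ^ (-α) := Real.rpow_nonneg hm0.le _
  have key : K x y * |(if x + y ≤ 1 then φ (x + y) else φ 1) - φ x - φ y|
      ≤ (4 * K₀ * m ^ (-α)) * (2 * L * m) :=
    mul_le_mul hK4 hA (abs_nonneg _) (by positivity)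
  have hpow : m ^ (-α) * m = m ^ (1 - α) := by
    rw [show (1 : ℝ) - α = -α + 1 by ring,
      Real.rpow_add hm0, Real.rpow_one]
  have hle1 : m ^ (1 - α) ≤ 1 :=
    Real.rpow_le_one hm0.le hm1 (by linarith [hα.2])
  calc K x y * |(if x + y ≤ 1 then φ (x + y) else φ 1) - φ x - φ y|
      ≤ (4 * K₀ * m ^ (-α)) * (2 * L * m) := key
    _ = 8 * K₀ * L * (m ^ (-α) * m) := by ring
    _ = 8 * K₀ * L * m ^ (1 - α) := by rw [hpow]
    _ ≤ 8 * K₀ * L * 1 := by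
        have : 0 ≤ 8 * K₀ * L := by positivity
        nlinarith
    _ = 8 * K₀ * L := by ring
end

section
/- Let γ ∈ [0,1], F₀ ≥ 0, F(x,y) ≤ F₀(x^γ+y^γ), and δ ∈ (0,1). For the indicator φ_δ = χ_{(0,δ)} on (0,1], the operator B[φ_δ](x) = (1/2)∫₀ˣ F(x−y,y)(φ_δ(x)−φ_δ(x−y)−φ_δ(y)) dy satisfies B[φ_δ](x) ≥ −F₀·((4+γ)/(1+γ))·δ for all x ∈ (0,1]. -/
open Set MeasureTheory intervalIntegral

/-- Let `γ ∈ [0,1]`, `F₀ ≥ 0`, `F x y ≤ F₀ (x^γ + y^γ)` and `δ ∈ (0,1)`.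
For the indicator `φ_δ = χ_(0,δ)` on `(0,1]`, the fragmentation operator satisfies
`B[φ_δ](x) ≥ -F₀ ((4+γ)/(1+γ)) δ` for all `x ∈ (0,1]`. -/
theorem stmt_5 (γ F₀ δ : ℝ) (hγ : γ ∈ Icc (0:ℝ) 1) (hF₀ : 0 ≤ F₀) (hδ : δ ∈ Ioo (0:ℝ) 1)
    (F : ℝ → ℝ → ℝ)
    (hFmeas : Measurable fun p : ℝ × ℝ => F p.1 p.2)
    (hFsymm : ∀ x ∈ Ioi (0:ℝ), ∀ y ∈ Ioi (0:ℝ), F x y = F y x)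
    (hFnn : ∀ x ∈ Ioi (0:ℝ), ∀ y ∈ Ioi (0:ℝ), 0 ≤ F x y)
    (hFbd : ∀ x ∈ Ioi (0:ℝ), ∀ y ∈ Ioi (0:ℝ), F x y ≤ F₀ * (x ^ γ + y ^ γ)) :
    ∀ x ∈ Ioc (0:ℝ) 1,
      -(F₀ * ((4 + γ) / (1 + γ)) * δ) ≤
        (1/2) * ∫ y in (0:ℝ)..x, F (x - y) y *
          ((if 0 < x ∧ x < δ then (1:ℝ) else 0)
            - (if 0 < x - y ∧ x - y < δ then (1:ℝ) else 0)
            - (if 0 < y ∧ y < δ then (1:ℝ) else 0)) := by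
  obtain ⟨hγ0, hγ1⟩ := hγ
  obtain ⟨hδ0, hδ1⟩ := hδ
  rintro x ⟨hx0, hx1⟩
  set g : ℝ → ℝ := fun y => F (x - y) y *
          ((if 0 < x ∧ x < δ then (1:ℝ) else 0)
            - (if 0 < x - y ∧ x - y < δ then (1:ℝ) else 0)
            - (if 0 < y ∧ y < δ then (1:ℝ) else 0)) with hgdef
  set h : ℝ → ℝ := fun y => 2 * F₀ *
      ((Ioo (x - δ) x).indicator (fun _ => (1:ℝ)) y
        + (Ioo (0:ℝ) δ).indicator (fun _ => (1:ℝ)) y) with hhdef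
  have hind01 : ∀ (s : Set ℝ) (y : ℝ), 0 ≤ s.indicator (fun _ => (1:ℝ)) y ∧
      s.indicator (fun _ => (1:ℝ)) y ≤ 1 := by
    intro s y; by_cases hm : y ∈ s <;> simp [hm]
  -- measurability
  have hφmeas : Measurable (fun u : ℝ => if 0 < u ∧ u < δ then (1:ℝ) else 0) := by
    have hms : MeasurableSet {u : ℝ | 0 < u ∧ u < δ} := by
      have : {u : ℝ | 0 < u ∧ u < δ} = Ioo 0 δ := rfl
      rw [this]; exact measurableSet_Ioo
    exact Measurable.ite hms measurable_const measurable_const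
  have hgmeas : Measurable g := by
    apply Measurable.mul
    · exact hFmeas.comp ((measurable_const.sub measurable_id).prodMk measurable_id)
    · apply Measurable.sub
      · apply Measurable.sub
        · exact measurable_const
        · exact hφmeas.comp (measurable_const.sub measurable_id)
      · exact hφmeas
  have hhmeas : Measurable h := by
    apply Measurable.mul measurable_const
    exact ((measurable_const.indicator measurableSet_Ioo).add
      (measurable_const.indicator measurableSet_Ioo))
  -- pointwise facts
  have hφ01 : ∀ u : ℝ, (0:ℝ) ≤ (if 0 < u ∧ u < δ then (1:ℝ) else 0) ∧
      (if 0 < u ∧ u < δ then (1:ℝ) else 0) ≤ 1 := by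
    intro u; by_cases hu : 0 < u ∧ u < δ <;> simp [hu]
  have hFb2 : ∀ y ∈ Ioo (0:ℝ) x, F (x - y) y ≤ 2 * F₀ := by
    rintro y ⟨hy0, hyx⟩
    have h1 : (0:ℝ) < x - y := by linarith
    have := hFbd (x - y) h1 y hy0
    have hp1 : (x - y) ^ γ ≤ 1 := Real.rpow_le_one h1.le (by linarith) hγ0
    have hp2 : y ^ γ ≤ 1 := Real.rpow_le_one hy0.le (by linarith) hγ0
    nlinarith
  have hkey : ∀ y ∈ Icc (0:ℝ) x, -h y ≤ g y := by
    rintro y ⟨hy0, hyx⟩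
    have hhnn : 0 ≤ h y := by
      apply mul_nonneg (by linarith)
      exact add_nonneg (hind01 _ _).1 (hind01 _ _).1
    rcases eq_or_lt_of_le hy0 with rfl | hy0'
    · have hz : g 0 = 0 := by simp [hgdef]
      rw [hz]; linarith
    rcases eq_or_lt_of_le hyx with rfl | hyx'
    · have hz : g y = 0 := by simp [hgdef]
      rw [hz]; linarith
    have hF0y : 0 ≤ F (x - y) y := hFnn _ (by simp only [mem_Ioi]; linarith) _ hy0'
    have hFle : F (x - y) y ≤ 2 * F₀ := hFb2 y ⟨hy0', hyx'⟩
    have hi1 : (if 0 < x - y ∧ x - y < δ then (1:ℝ) else 0)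
        = (Ioo (x - δ) x).indicator (fun _ => (1:ℝ)) y := by
      by_cases hc : 0 < x - y ∧ x - y < δ
      · rw [if_pos hc, Set.indicator_of_mem]
        exact ⟨by linarith [hc.2], by linarith [hc.1]⟩
      · rw [if_neg hc, Set.indicator_of_notMem]
        intro hm; exact hc ⟨by linarith [hm.2], by linarith [hm.1]⟩
    have hi2 : (if 0 < y ∧ y < δ then (1:ℝ) else 0)
        = (Ioo (0:ℝ) δ).indicator (fun _ => (1:ℝ)) y := by
      by_cases hc : 0 < y ∧ y < δ
      · rw [if_pos hc, Set.indicator_of_mem]; exact hc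
      · rw [if_neg hc, Set.indicator_of_notMem]; exact hc
    have hs : 0 ≤ (Ioo (x - δ) x).indicator (fun _ => (1:ℝ)) y
        + (Ioo (0:ℝ) δ).indicator (fun _ => (1:ℝ)) y :=
      add_nonneg (hind01 _ _).1 (hind01 _ _).1
    have hbr : -((Ioo (x - δ) x).indicator (fun _ => (1:ℝ)) y
        + (Ioo (0:ℝ) δ).indicator (fun _ => (1:ℝ)) y) ≤
        ((if 0 < x ∧ x < δ then (1:ℝ) else 0)
            - (if 0 < x - y ∧ x - y < δ then (1:ℝ) else 0)
            - (if 0 < y ∧ y < δ then (1:ℝ) else 0)) := by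
      rw [← hi1, ← hi2]
      have := (hφ01 x).1
      linarith
    calc -h y = -(2 * F₀) * ((Ioo (x - δ) x).indicator (fun _ => (1:ℝ)) y
        + (Ioo (0:ℝ) δ).indicator (fun _ => (1:ℝ)) y) := by rw [hhdef]; ring
      _ ≤ -(F (x - y) y) * ((Ioo (x - δ) x).indicator (fun _ => (1:ℝ)) y
        + (Ioo (0:ℝ) δ).indicator (fun _ => (1:ℝ)) y) :=
          mul_le_mul_of_nonneg_right (by linarith) hs
      _ ≤ g y := by
          rw [hgdef]
          simp only
          nlinarith [mul_le_mul_of_nonneg_left hbr hF0y]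
  -- integrability
  have hgint : IntervalIntegrable g volume 0 x := by
    rw [intervalIntegrable_iff_integrableOn_Ioc_of_le hx0.le]
    apply Integrable.mono' (integrable_const (4 * F₀)) hgmeas.aestronglyMeasurable
    filter_upwards [ae_restrict_mem measurableSet_Ioc] with y hy
    obtain ⟨hy0, hyx⟩ := hy
    rcases eq_or_lt_of_le hyx with rfl | hyx'
    · have hz : g y = 0 := by simp [hgdef]
      rw [hz]; simp; linarith
    have hF0y : 0 ≤ F (x - y) y := hFnn _ (by simp only [mem_Ioi]; linarith) _ hy0
    have hFle : F (x - y) y ≤ 2 * F₀ := hFb2 y ⟨hy0, hyx'⟩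
    rw [hgdef]
    simp only [Real.norm_eq_abs, abs_mul]
    have h1 := hφ01 x; have h2 := hφ01 (x - y); have h3 := hφ01 y
    have habs2 : |((if 0 < x ∧ x < δ then (1:ℝ) else 0)
            - (if 0 < x - y ∧ x - y < δ then (1:ℝ) else 0)
            - (if 0 < y ∧ y < δ then (1:ℝ) else 0))| ≤ 2 := by
      rw [abs_le]
      constructor <;> linarith [h1.1, h1.2, h2.1, h2.2, h3.1, h3.2]
    rw [abs_of_nonneg hF0y]
    nlinarith
  have hindint : ∀ a b : ℝ,
      IntervalIntegrable ((Ioo a b).indicator (fun _ => (1:ℝ))) volume 0 x := by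
    intro a b
    rw [intervalIntegrable_iff_integrableOn_Ioc_of_le hx0.le]
    apply Integrable.mono' (integrable_const 1)
      (measurable_const.indicator measurableSet_Ioo).aestronglyMeasurable
    filter_upwards with y
    rw [Real.norm_eq_abs, abs_of_nonneg (hind01 _ _).1]
    exact (hind01 _ _).2
  have hhint : IntervalIntegrable h volume 0 x := by
    have := ((hindint (x - δ) x).add (hindint 0 δ)).const_mul (2 * F₀)
    exact this
  -- integral of indicators
  have hIle : ∀ a b : ℝ, 0 ≤ b - a → b - a ≤ δ →
      ∫ y in (0:ℝ)..x, (Ioo a b).indicator (fun _ => (1:ℝ)) y ≤ δ := by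
    intro a b hab0 hab
    rw [intervalIntegral.integral_of_le hx0.le,
      MeasureTheory.setIntegral_indicator measurableSet_Ioo, setIntegral_const, smul_eq_mul,
      mul_one]
    calc (volume (Ioc 0 x ∩ Ioo a b)).toReal ≤ (volume (Ioo a b)).toReal := by
          apply ENNReal.toReal_mono
          · simp [Real.volume_Ioo]
          · exact measure_mono inter_subset_right
      _ ≤ δ := by
          rw [Real.volume_Ioo, ENNReal.toReal_ofReal hab0]
          exact hab
  -- conclude
  have hmono : ∫ y in (0:ℝ)..x, (-h y) ≤ ∫ y in (0:ℝ)..x, g y :=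
    intervalIntegral.integral_mono_on hx0.le hhint.neg hgint hkey
  have hneg : ∫ y in (0:ℝ)..x, (-h y) = -∫ y in (0:ℝ)..x, h y :=
    intervalIntegral.integral_neg
  have hhcalc : ∫ y in (0:ℝ)..x, h y ≤ 2 * F₀ * (δ + δ) := by
    have heq : ∫ y in (0:ℝ)..x, h y = 2 * F₀ *
        ((∫ y in (0:ℝ)..x, (Ioo (x - δ) x).indicator (fun _ => (1:ℝ)) y)
          + ∫ y in (0:ℝ)..x, (Ioo (0:ℝ) δ).indicator (fun _ => (1:ℝ)) y) := by
      rw [hhdef]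
      rw [intervalIntegral.integral_const_mul,
        intervalIntegral.integral_add (hindint _ _) (hindint _ _)]
    rw [heq]
    have hI1 : ∫ y in (0:ℝ)..x, (Ioo (x - δ) x).indicator (fun _ => (1:ℝ)) y ≤ δ :=
      hIle (x - δ) x (by linarith) (by linarith)
    have hI2 : ∫ y in (0:ℝ)..x, (Ioo (0:ℝ) δ).indicator (fun _ => (1:ℝ)) y ≤ δ :=
      hIle 0 δ (by linarith) (by linarith)
    nlinarith
  have hglb : -(2 * F₀ * (δ + δ)) ≤ ∫ y in (0:ℝ)..x, g y := by
    rw [hneg] at hmono; linarith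
  have hr2 : 2 ≤ (4 + γ) / (1 + γ) := by
    rw [le_div_iff₀ (by linarith : (0:ℝ) < 1 + γ)]; linarith
  have hfin : 2 * F₀ * δ ≤ F₀ * ((4 + γ) / (1 + γ)) * δ := by
    nlinarith [mul_le_mul_of_nonneg_left hr2 (mul_nonneg hF₀ hδ0.le)]
  linarith
end

section
/- For all real x, y ≥ 0 and N > 1, x ≤ N·y + (1/log N)·(x − y)(log x − log y), where the product (x−y)(log x − log y) is interpreted as 0 if x = y and +∞ if exactly one of x,y is zero (with the convention that the inequality trivially holds in those cases given x,y > 0 or both zero). -/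
/-- For all reals `x, y > 0` and `N > 1`,
`x ≤ N y + (1/log N) (x - y)(log x - log y)`. (For `x = y = 0` the inequality is trivial;
the degenerate cases where exactly one of `x, y` vanishes are interpreted as `+∞` on the
right-hand side.) -/
theorem stmt_6 :
    ∀ x y N : ℝ, 0 < x → 0 < y → 1 < N →
      x ≤ N * y + (1 / Real.log N) * ((x - y) * (Real.log x - Real.log y)) := by
  intro x y N hx hy hN
  have hlogN : 0 < Real.log N := Real.log_pos hN
  rcases le_or_gt x (N * y) with h | h
  · have hprod : 0 ≤ (x - y) * (Real.log x - Real.log y) := by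
      rcases le_total x y with hxy | hxy
      · nlinarith [sub_nonpos.2 (Real.log_le_log hx hxy)]
      · exact mul_nonneg (by linarith) (sub_nonneg.2 (Real.log_le_log hy hxy))
    nlinarith [mul_nonneg (le_of_lt (one_div_pos.2 hlogN)) hprod]
  · have hxy : y < x := lt_of_le_of_lt (le_mul_of_one_le_left hy.le hN.le) h
    have hlog : Real.log N ≤ Real.log x - Real.log y := by
      have hd : N ≤ x / y := le_of_lt ((lt_div_iff₀ hy).2 (by linarith))
      have := Real.log_le_log (by linarith) hd
      rwa [Real.log_div hx.ne' hy.ne'] at this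
    have key : (x - y) * Real.log N ≤ (x - y) * (Real.log x - Real.log y) :=
      mul_le_mul_of_nonneg_left hlog (by linarith)
    have h2 : x - N * y ≤ (1 / Real.log N) * ((x - y) * (Real.log x - Real.log y)) := by
      rw [div_mul_eq_mul_div, one_mul, le_div_iff₀ hlogN]
      nlinarith [mul_le_mul_of_nonneg_left hN.le hy.le]
    linarith
end
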